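/- Let K = {0,1}^ℕ × {0,1} be the split interval, i.e., the order topology induced by the lexicographic order. Then the family of characteristic functions {χ_{[(0^ℕ,0), (x,0)]} : x ∈ {0,1}^ℕ} of closed initial intervals is an irredundant set in C(K,ℂ) of cardinality continuum. -/

import Mathlib

/-- The split interval: `{0,1}^ℕ × {0,1}` with the lexicographic order
(where `{0,1}^ℕ` itself carries the lexicographic order). -/
abbrev SplitInterval : Type := Lex ((Lex (ℕ → Bool)) × Bool)

/-- The split interval carries the order topology of its lexicographic order. -/
noncomputable instance : TopologicalSpace SplitInterval := Preorder.topology _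

instance : OrderTopology SplitInterval := ⟨rfl⟩

/-- A subset `X` of `C(K,ℂ)` is irredundant if no element of `X` belongs to the closed
*-subalgebra generated by the remaining elements. -/
def Irredundant {K : Type*} [TopologicalSpace K] (X : Set C(K, ℂ)) : Prop :=
  ∀ f ∈ X, f ∉ closure (NonUnitalStarAlgebra.adjoin ℂ (X \ {f}) : Set C(K, ℂ))

namespace SplitIrrAux

/-- The minimum of the split interval. -/
abbrev bot0 : SplitInterval := toLex (toLex (fun _ => false), false)

lemma bot0_le (k : SplitInterval) : bot0 ≤ k := by
  have h1 : toLex (fun _ => false : ℕ → Bool) ≤ (ofLex k).1 :=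
    Pi.toLex_monotone (fun i => Bool.false_le _)
  rcases eq_or_lt_of_le h1 with h | h
  · exact Prod.Lex.le_iff.2 (Or.inr ⟨h, Bool.false_le _⟩)
  · exact Prod.Lex.le_iff.2 (Or.inl h)

/-- The closed initial interval. -/
def S (x : ℕ → Bool) : Set SplitInterval :=
  Set.Icc bot0 (toLex (toLex x, false))

lemma S_eq_Iic (x : ℕ → Bool) : S x = Set.Iic (toLex (toLex x, false)) := by
  ext k
  simp [S, Set.mem_Icc, bot0_le k]

lemma le_false_iff (x : ℕ → Bool) (k : SplitInterval) :
    k ≤ toLex (toLex x, false) ↔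
      (ofLex k).1 < toLex x ∨ ((ofLex k).1 = toLex x ∧ (ofLex k).2 = false) := by
  constructor
  · intro h
    rcases Prod.Lex.le_iff.1 h with h | ⟨h1, h2⟩
    · exact Or.inl h
    · exact Or.inr ⟨h1, le_bot_iff.1 h2⟩
  · rintro (h | ⟨h1, h2⟩)
    · exact Prod.Lex.le_iff.2 (Or.inl h)
    · exact Prod.Lex.le_iff.2 (Or.inr ⟨h1, h2.le⟩)

lemma lt_true_iff (x : ℕ → Bool) (k : SplitInterval) :
    k < toLex (toLex x, true) ↔
      (ofLex k).1 < toLex x ∨ ((ofLex k).1 = toLex x ∧ (ofLex k).2 = false) := by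
  constructor
  · intro h
    rcases Prod.Lex.lt_iff.1 h with h | ⟨h1, h2⟩
    · exact Or.inl h
    · exact Or.inr ⟨h1, Bool.lt_iff.1 h2 |>.1⟩
  · rintro (h | ⟨h1, h2⟩)
    · exact Prod.Lex.lt_iff.2 (Or.inl h)
    · exact Prod.Lex.lt_iff.2
        (Or.inr ⟨h1, by rw [h2]; exact Bool.lt_iff.2 ⟨rfl, rfl⟩⟩)

lemma S_eq_Iio (x : ℕ → Bool) : S x = Set.Iio (toLex (toLex x, true)) := by
  rw [S_eq_Iic]
  ext k
  simp only [Set.mem_Iic, Set.mem_Iio, le_false_iff, lt_true_iff]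

lemma clopen_S (x : ℕ → Bool) : IsClopen (S x) :=
  ⟨S_eq_Iic x ▸ isClosed_Iic, S_eq_Iio x ▸ isOpen_Iio⟩

/-- The characteristic function of `S x` as a continuous map. -/
noncomputable def F (x : ℕ → Bool) : C(SplitInterval, ℂ) :=
  ⟨Set.indicator (S x) fun _ => (1 : ℂ),
   continuous_indicator (by simp [(clopen_S x).frontier_eq])
     continuous_const.continuousOn⟩

lemma F_apply (x : ℕ → Bool) (k : SplitInterval) :
    F x k = Set.indicator (S x) (fun _ => (1 : ℂ)) k := rfl

lemma mem_S_false_iff (x y : ℕ → Bool) :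
    toLex (toLex x, false) ∈ S y ↔ toLex x ≤ toLex y := by
  rw [S_eq_Iic, Set.mem_Iic, le_false_iff]
  simp [le_iff_lt_or_eq]
  exact Iff.rfl

lemma mem_S_true_iff (x y : ℕ → Bool) :
    toLex (toLex x, true) ∈ S y ↔ toLex x < toLex y := by
  rw [S_eq_Iic, Set.mem_Iic, le_false_iff]
  simp

lemma F_self_false (x : ℕ → Bool) : F x (toLex (toLex x, false)) = 1 := by
  rw [F_apply, Set.indicator_of_mem ((mem_S_false_iff x x).2 le_rfl)]

lemma F_self_true (x : ℕ → Bool) : F x (toLex (toLex x, true)) = 0 := by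
  rw [F_apply, Set.indicator_of_notMem]
  rw [mem_S_true_iff]
  exact lt_irrefl _

lemma F_ne_eq (x y : ℕ → Bool) (hxy : y ≠ x) :
    F y (toLex (toLex x, false)) = F y (toLex (toLex x, true)) := by
  have hne : toLex x ≠ toLex y := fun h => hxy (toLex.injective h).symm
  by_cases h : toLex x < toLex y
  · rw [F_apply, F_apply, Set.indicator_of_mem ((mem_S_false_iff x y).2 h.le),
      Set.indicator_of_mem ((mem_S_true_iff x y).2 h)]
  · rw [F_apply, F_apply, Set.indicator_of_notMem, Set.indicator_of_notMem]
    · rw [mem_S_true_iff]; exact h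
    · rw [mem_S_false_iff]
      exact fun hle => h (lt_of_le_of_ne hle hne)

lemma F_injective : Function.Injective F := by
  intro x y h
  have h1 : toLex x ≤ toLex y := by
    have := F_self_false x
    rw [h, F_apply] at this
    by_contra hc
    rw [Set.indicator_of_notMem (fun hm => hc ((mem_S_false_iff x y).1 hm))] at this
    exact one_ne_zero this.symm
  have h2 : toLex y ≤ toLex x := by
    have := F_self_false y
    rw [← h, F_apply] at this
    by_contra hc
    rw [Set.indicator_of_notMem (fun hm => hc ((mem_S_false_iff y x).1 hm))] at this
    exact one_ne_zero this.symm
  exact toLex.injective (le_antisymm h1 h2)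

end SplitIrrAux

open SplitIrrAux in
/-- In the split interval `K = {0,1}^ℕ × {0,1}` with the order topology of the lexicographic
order, the characteristic functions of the closed initial intervals `[(0^ℕ,0), (x,0)]` for
`x ∈ {0,1}^ℕ` are continuous, pairwise distinct, and form an irredundant set in `C(K,ℂ)` of
cardinality continuum. -/
theorem splitInterval_irredundant_continuum :
    ∃ F : (ℕ → Bool) → C(SplitInterval, ℂ),
      (∀ (x : ℕ → Bool) (k : SplitInterval),
        F x k = Set.indicator
          (Set.Icc (toLex (toLex (fun _ => false), false)) (toLex (toLex x, false)))
          (fun _ => (1 : ℂ)) k) ∧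
      Function.Injective F ∧
      Cardinal.mk (Set.range F) = Cardinal.continuum ∧
      Irredundant (Set.range F) := by
  refine ⟨SplitIrrAux.F, fun x k => rfl, F_injective, ?_, ?_⟩
  · rw [Cardinal.mk_range_eq _ F_injective]
    rw [← Cardinal.power_def, Cardinal.mk_bool, Cardinal.mk_nat,
      Cardinal.two_power_aleph0]
  · intro f hf
    obtain ⟨x, rfl⟩ := hf
    set p : SplitInterval := toLex (toLex x, false) with hp
    set q : SplitInterval := toLex (toLex x, true) with hq
    let A : NonUnitalStarSubalgebra ℂ C(SplitInterval, ℂ) :=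
      { carrier := {g | g p = g q}
        add_mem' := fun {a b} ha hb => by
          simp only [Set.mem_setOf_eq, ContinuousMap.add_apply] at *
          rw [ha, hb]
        zero_mem' := rfl
        mul_mem' := fun {a b} ha hb => by
          simp only [Set.mem_setOf_eq, ContinuousMap.mul_apply] at *
          rw [ha, hb]
        smul_mem' := fun c a ha => by
          simp only [Set.mem_setOf_eq, ContinuousMap.smul_apply] at *
          rw [ha]
        star_mem' := fun {a} ha => by
          simp only [Set.mem_setOf_eq, ContinuousMap.star_apply] at *
          rw [ha] }
    have hAclosed : IsClosed (A : Set C(SplitInterval, ℂ)) :=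
      isClosed_eq (ContinuousEvalConst.continuous_eval_const p)
        (ContinuousEvalConst.continuous_eval_const q)
    have hsub : Set.range SplitIrrAux.F \ {SplitIrrAux.F x} ⊆ (A : Set C(SplitInterval, ℂ)) := by
      rintro g ⟨⟨y, rfl⟩, hne⟩
      have hyx : y ≠ x := fun h => hne (by rw [h]; rfl)
      exact F_ne_eq x y hyx
    have hclos : closure (NonUnitalStarAlgebra.adjoin ℂ
        (Set.range SplitIrrAux.F \ {SplitIrrAux.F x}) : Set C(SplitInterval, ℂ)) ⊆
        (A : Set C(SplitInterval, ℂ)) :=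
      closure_minimal (NonUnitalStarAlgebra.adjoin_le hsub) hAclosed
    intro hmem
    have : SplitIrrAux.F x p = SplitIrrAux.F x q := hclos hmem
    rw [F_self_false, F_self_true] at this
    exact one_ne_zero this
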